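/- Let U be unitary on L²(E) where E is the set of oriented edges of a graph, and let T̂ be the antiunitary involution T̂|A,B⟩ = |B,A⟩ extended antilinearly. Then T̂UT̂ = U⁻¹ holds if and only if for every vertex A and all neighbors k, k′ of A, ⟨A,k|U|k′,A⟩ = ⟨A,k′|U|k,A⟩. -/

import Mathlib

/-!
Writing `M x y = ⟨x|U|y⟩` and `σ` for edge reversal, `T̂UT̂` has matrix `conj (M (σ x) (σ y))`
and `U⁻¹ = U*` has matrix `conj (M y x)`, so time-reversal invariance says
`M (σ x) (σ y) = M y x` for all edges. By locality both sides vanish unless `x` ends where `y`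
starts, at a vertex `A`; for `x = (k, A)`, `y = (A, k')` this is the stated symmetry at `A`.
-/

open scoped ComplexConjugate

namespace EuclideanSpace

variable {𝕜 ι : Type*} [RCLike 𝕜] [Fintype ι] [DecidableEq ι]

theorem linearMap_apply_eq_sum {F : Type*} [FunLike F (EuclideanSpace 𝕜 ι) (EuclideanSpace 𝕜 ι)]
    [LinearMapClass F 𝕜 (EuclideanSpace 𝕜 ι) (EuclideanSpace 𝕜 ι)] (L : F)
    (f : EuclideanSpace 𝕜 ι) (i : ι) : L f i = ∑ j, L (single j 1) i * f j := by
  conv_lhs => rw [← (basisFun ι 𝕜).sum_repr f]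
  simp [mul_comm]

theorem linearIsometryEquiv_symm_apply_eq_sum (U : EuclideanSpace 𝕜 ι ≃ₗᵢ[𝕜] EuclideanSpace 𝕜 ι)
    (f : EuclideanSpace 𝕜 ι) (i : ι) : U.symm f i = ∑ j, conj (U (single i 1) j) * f j := by
  rw [← one_mul (U.symm f i), ← map_one conj, ← inner_single_left, ← U.inner_map_map,
    U.apply_symm_apply, PiLp.inner_apply]
  simp [mul_comm]

theorem conj_reindex_conj_eq_symm_iff {σ : ι → ι} (hσ : σ.Involutive)
    (U : EuclideanSpace 𝕜 ι ≃ₗᵢ[𝕜] EuclideanSpace 𝕜 ι) (T : EuclideanSpace 𝕜 ι → EuclideanSpace 𝕜 ι)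
    (hT : ∀ f i, T f i = conj (f (σ i))) :
    (∀ f, T (U (T f)) = U.symm f) ↔ ∀ i j, U (single (σ j) 1) (σ i) = U (single i 1) j := by
  have hTUT : ∀ f i, T (U (T f)) i = ∑ j, conj (U (single (σ j) 1) (σ i)) * f j := by
    intro f i
    rw [hT, linearMap_apply_eq_sum U, ← Equiv.sum_comp (hσ.toPerm σ)]
    simp [hT, hσ _]
  constructor
  · intro h i j
    have := congr($(h (single j 1)) i)
    rw [hTUT, linearIsometryEquiv_symm_apply_eq_sum] at this
    simp only [PiLp.single_apply, mul_ite, mul_one, mul_zero, Finset.sum_ite_eq',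
      Finset.mem_univ, if_true] at this
    exact (starRingEnd 𝕜).injective this
  · intro h f
    ext i
    rw [hTUT, linearIsometryEquiv_symm_apply_eq_sum]
    simp only [h]

end EuclideanSpace

section Graph

variable {V : Type*} {Adj : V → V → Prop}

def edgeReverse (hsym : Symmetric Adj) (e : {p : V × V // Adj p.1 p.2}) :
    {p : V × V // Adj p.1 p.2} :=
  ⟨(e.1.2, e.1.1), hsym e.2⟩

theorem edgeReverse_involutive (hsym : Symmetric Adj) : (edgeReverse hsym).Involutive :=
  fun _ => rfl

theorem edgeReverse_symm_iff_of_local {α : Type*} [Zero α] (hsym : Symmetric Adj)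
    (M : {p : V × V // Adj p.1 p.2} → {p : V × V // Adj p.1 p.2} → α)
    (hloc : ∀ x y, x.1.1 ≠ y.1.2 → M x y = 0) :
    (∀ x y, M (edgeReverse hsym x) (edgeReverse hsym y) = M y x) ↔
      ∀ (A k k' : V) (hk : Adj k A) (hk' : Adj k' A),
        M ⟨(A, k), hsym hk⟩ ⟨(k', A), hk'⟩ = M ⟨(A, k'), hsym hk'⟩ ⟨(k, A), hk⟩ := by
  constructor
  · intro h A k k' hk hk'
    exact h ⟨(k, A), hk⟩ ⟨(A, k'), hsym hk'⟩
  · rintro h ⟨⟨c, d⟩, hcd⟩ ⟨⟨a, b⟩, hab⟩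
    by_cases had : a = d
    · subst had
      exact h a c b hcd (hsym hab)
    · exact (hloc _ _ (Ne.symm had)).trans (hloc _ _ had).symm

end Graph

/-- for a quantum walk on the oriented edges of a graph, with
`T̂ |A,B⟩ = |B,A⟩` extended antilinearly, the time-reversal condition
`T̂ U T̂ = U⁻¹` holds iff `⟨A,k|U|k′,A⟩ = ⟨A,k′|U|k,A⟩` for every vertex `A`
and all neighbors `k, k′` of `A`.  Here `U` maps the span of edges ending at a
vertex into the span of edges starting at that vertex (locality). -/
theorem stmt_13 {V : Type*} [Fintype V] [DecidableEq V]
    (Adj : V → V → Prop) [DecidableRel Adj] (hsym : Symmetric Adj)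
    (U : EuclideanSpace ℂ {p : V × V // Adj p.1 p.2} ≃ₗᵢ[ℂ]
         EuclideanSpace ℂ {p : V × V // Adj p.1 p.2})
    (δ : ∀ a b : V, Adj a b → EuclideanSpace ℂ {p : V × V // Adj p.1 p.2})
    (hδ : ∀ (a b : V) (h : Adj a b), δ a b h = EuclideanSpace.single ⟨(a, b), h⟩ 1)
    (T : EuclideanSpace ℂ {p : V × V // Adj p.1 p.2} →
         EuclideanSpace ℂ {p : V × V // Adj p.1 p.2})
    (hT : ∀ (f : EuclideanSpace ℂ {p : V × V // Adj p.1 p.2})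
        (e : {p : V × V // Adj p.1 p.2}),
        T f e = starRingEnd ℂ (f ⟨(e.1.2, e.1.1), hsym e.2⟩))
    (hloc : ∀ (B A : V) (hBA : Adj B A) (C D : V) (hCD : Adj C D), C ≠ A →
        U (δ B A hBA) ⟨(C, D), hCD⟩ = 0) :
    (∀ f, T (U (T f)) = U.symm f) ↔
      (∀ (A k k' : V) (hk : Adj k A) (hk' : Adj k' A),
        (inner ℂ (δ A k (hsym hk)) (U (δ k' A hk')) : ℂ) =
        (inner ℂ (δ A k' (hsym hk')) (U (δ k A hk)) : ℂ)) := by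
  obtain rfl : δ = fun a b h => EuclideanSpace.single ⟨(a, b), h⟩ 1 := by
    funext a b h
    exact hδ a b h
  simp only [EuclideanSpace.inner_single_left, map_one, one_mul]
  rw [EuclideanSpace.conj_reindex_conj_eq_symm_iff (edgeReverse_involutive hsym) U T hT]
  exact edgeReverse_symm_iff_of_local hsym (fun x y => U (EuclideanSpace.single y 1) x)
    fun ⟨⟨C, D⟩, hCD⟩ ⟨⟨B, A⟩, hBA⟩ hCA => hloc B A hBA C D hCD hCA
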